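/- arXiv:2410.10884 — 2 statements merged into one kernel-verified Lean document; each statement's English description precedes it below -/
import Mathlib

section
/- Let A = {(x,y) : x,y ∈ ℤ²_{≥0}, det(x,y) = 1}. Then Σ_{(x,y)∈A} (|x| + |y| - |x+y|)² = 2 - π/2. -/
/-!
The pairs in the sum are the nodes of the Stern–Brocot tree: each arises from `((1,0),(0,1))` by a
unique word in the moves `(x, y) ↦ (x, x + y)` and `(x, y) ↦ (x + y, y)`. Let `θ` be the angle
between `x` and `y`; since `det (x, y) = 1`, `cot θ = x·y` and `tan (θ/2) = |x||y| - x·y`. With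
`h = 2 tan (θ/2)` the summand equals `h (x, y) - h (x, x + y) - h (x + y, y)`, so the sum over the
first `n` levels of the tree is `2` minus the sum of `h` over level `n`. Angles add up along the
tree, so `θ` sums to `π/2` over every level, while `θ ≤ h ≤ θ + h tan² (θ/2) / 3` and
`tan (θ/2) ≤ 1/(n+1)` on level `n`. Hence the level sums of `h` tend to `π/2`.
-/

open Real RealInnerProductSpace

theorem sq_norm_add_norm_sub_norm_add {E : Type*} [NormedAddCommGroup E] [InnerProductSpace ℝ E]
    (x y : E) :
    (‖x‖ + ‖y‖ - ‖x + y‖) ^ 2 = 2 * (‖x‖ * ‖y‖ - ⟪x, y⟫) - 2 * (‖x‖ * ‖x + y‖ - ⟪x, x + y⟫)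
      - 2 * (‖x + y‖ * ‖y‖ - ⟪x + y, y⟫) := by
  rw [inner_add_right, inner_add_left, real_inner_self_eq_norm_sq, real_inner_self_eq_norm_sq]
  linear_combination norm_add_sq_real x y

theorem hasSum_sigma_of_nonneg {α : Type*} {β : α → Type*} [∀ a, Fintype (β a)]
    {f : (Σ a, β a) → ℝ} (hf : 0 ≤ f) {s : ℝ} (h : HasSum (fun a ↦ ∑ b, f ⟨a, b⟩) s) :
    HasSum f s := by
  have hf_summable : Summable f := (summable_sigma_of_nonneg hf).2
    ⟨fun a ↦ (hasSum_fintype _).summable, by simpa only [tsum_fintype] using h.summable⟩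
  exact (hf_summable.hasSum.sigma fun a ↦ hasSum_fintype _).unique h ▸ hf_summable.hasSum

namespace Real

lemma arctan_le_self {x : ℝ} (hx : 0 ≤ x) : arctan x ≤ x := by
  simpa [tan_arctan] using le_tan (arctan_nonneg.2 hx) (arctan_lt_pi_div_two x)

lemma sub_arctan_le {x : ℝ} (hx : 0 ≤ x) : x - arctan x ≤ x ^ 3 / 3 := by
  let F : ℝ → ℝ := fun t ↦ t ^ 3 / 3 - t + arctan t
  have hF : ∀ t, HasDerivAt F (t ^ 4 / (1 + t ^ 2)) t := fun t ↦ by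
    refine ((((hasDerivAt_pow 3 t).div_const 3).sub (hasDerivAt_id t)).add
      (hasDerivAt_arctan t)).congr_deriv ?_
    field_simp
    ring
  have := monotone_of_deriv_nonneg (fun t ↦ (hF t).differentiableAt)
    (fun t ↦ (hF t).deriv ▸ by positivity) hx
  simp only [F, arctan_zero] at this
  linarith

noncomputable def arccot (d : ℝ) : ℝ := π / 2 - arctan d

noncomputable def tanHalfArccot (d : ℝ) : ℝ := √(1 + d ^ 2) - d

lemma arccot_eq_arccot_add_arccot {a b d : ℝ} (hd : 0 ≤ d) (ha : 0 < a) (hb : 0 < b)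
    (h : a * b = 1 + d * (a + b)) : arccot d = arccot a + arccot b := by
  suffices arctan a + arctan b = π / 2 + arctan d by unfold arccot; linarith
  rcases hd.eq_or_lt with rfl | hd
  · rw [show b = a⁻¹ by field_simp; linarith, arctan_inv_of_pos ha, arctan_zero]
    ring
  · rw [arctan_add_eq_add_pi (by nlinarith) ha,
      show (a + b) / (1 - a * b) = -d⁻¹ by
        rw [show 1 - a * b = -(d * (a + b)) by linarith]; field_simp,
      arctan_neg, arctan_inv_of_pos hd]
    ring

lemma tanHalfArccot_mul_add (d : ℝ) : tanHalfArccot d * (√(1 + d ^ 2) + d) = 1 := by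
  unfold tanHalfArccot
  linear_combination sq_sqrt (show 0 ≤ 1 + d ^ 2 by positivity)

lemma tanHalfArccot_pos (d : ℝ) : 0 < tanHalfArccot d := by
  have hs := sq_sqrt (show 0 ≤ 1 + d ^ 2 by positivity)
  have : d < √(1 + d ^ 2) := by nlinarith [sqrt_nonneg (1 + d ^ 2)]
  unfold tanHalfArccot
  linarith

lemma tanHalfArccot_le {d : ℝ} (hd : 0 ≤ d) : tanHalfArccot d ≤ (1 + d)⁻¹ := by
  have : 1 ≤ √(1 + d ^ 2) := one_le_sqrt.2 (by nlinarith)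
  rw [← one_div, le_div_iff₀ (by linarith)]
  nlinarith [tanHalfArccot_mul_add d, mul_le_mul_of_nonneg_left this (tanHalfArccot_pos d).le]

lemma two_mul_arctan_tanHalfArccot {d : ℝ} (hd : 0 ≤ d) :
    2 * arctan (tanHalfArccot d) = arccot d := by
  set u := tanHalfArccot d
  have hu₀ : 0 < u := tanHalfArccot_pos d
  have hu : u * (u + 2 * d) = 1 := by
    rw [← tanHalfArccot_mul_add d]; unfold u tanHalfArccot; ring
  rcases hd.eq_or_lt with rfl | hd
  · rw [show u = 1 by nlinarith, arctan_one, arccot, arctan_zero]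
    ring
  · rw [two_mul_arctan (by linarith) (by nlinarith),
      show 2 * u / (1 - u ^ 2) = d⁻¹ by
        rw [show 1 - u ^ 2 = 2 * d * u by linarith]; field_simp,
      arctan_inv_of_pos hd, arccot]

lemma arccot_le_two_mul_tanHalfArccot {d : ℝ} (hd : 0 ≤ d) :
    arccot d ≤ 2 * tanHalfArccot d := by
  rw [← two_mul_arctan_tanHalfArccot hd]
  linarith [arctan_le_self (tanHalfArccot_pos d).le]

lemma two_mul_tanHalfArccot_le {d : ℝ} (hd : 0 ≤ d) :
    2 * tanHalfArccot d ≤ arccot d + 2 * tanHalfArccot d / (3 * (1 + d) ^ 2) := by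
  set u := tanHalfArccot d
  have hu := tanHalfArccot_pos d
  have hsq : u ^ 2 ≤ ((1 + d) ^ 2)⁻¹ := by
    rw [← inv_pow]; exact pow_le_pow_left₀ hu.le (tanHalfArccot_le hd) 2
  rw [← two_mul_arctan_tanHalfArccot hd,
    show 2 * u / (3 * (1 + d) ^ 2) = 2 * u / 3 * ((1 + d) ^ 2)⁻¹ by
      rw [div_mul_eq_div_div]; ring]
  nlinarith [sub_arctan_le hu.le]

end Real

namespace SternBrocot

abbrev Pair := (ℤ × ℤ) × (ℤ × ℤ)

def IsPosBasis (p : Pair) : Prop :=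
  0 ≤ p.1.1 ∧ 0 ≤ p.1.2 ∧ 0 ≤ p.2.1 ∧ 0 ≤ p.2.2 ∧ p.1.1 * p.2.2 - p.1.2 * p.2.1 = 1

def root : Pair := ((1, 0), (0, 1))

def child : Bool → Pair → Pair
  | true, p => (p.1, p.1 + p.2)
  | false, p => (p.1 + p.2, p.2)

def walk (w : List Bool) (p : Pair) : Pair := w.foldr child p

@[simp] lemma walk_nil (p : Pair) : walk [] p = p := rfl

@[simp] lemma walk_cons (b : Bool) (w : List Bool) (p : Pair) :
    walk (b :: w) p = child b (walk w p) := rfl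

lemma isPosBasis_root : IsPosBasis root := by norm_num [IsPosBasis, root]

namespace IsPosBasis

variable {p : Pair}

lemma child (hp : IsPosBasis p) (b : Bool) : IsPosBasis (child b p) := by
  obtain ⟨h₁, h₂, h₃, h₄, hdet⟩ := hp
  cases b <;> refine ⟨?_, ?_, ?_, ?_, ?_⟩ <;>
    simp only [SternBrocot.child, Prod.fst_add, Prod.snd_add] <;>
    first | omega | linear_combination hdet

lemma walk (hp : IsPosBasis p) (w : List Bool) : IsPosBasis (walk w p) := by
  induction w with
  | nil => exact hp
  | cons b w ih => exact ih.child b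

lemma fst_pos (hp : IsPosBasis p) : 0 < p.1.1 + p.1.2 := by
  obtain ⟨h₁, h₂, h₃, h₄, hdet⟩ := hp
  by_contra h
  rw [show p.1.1 = 0 by omega, show p.1.2 = 0 by omega] at hdet
  simp at hdet

lemma snd_pos (hp : IsPosBasis p) : 0 < p.2.1 + p.2.2 := by
  obtain ⟨h₁, h₂, h₃, h₄, hdet⟩ := hp
  by_contra h
  rw [show p.2.1 = 0 by omega, show p.2.2 = 0 by omega] at hdet
  simp at hdet

lemma child_ne_root (hp : IsPosBasis p) (b : Bool) : SternBrocot.child b p ≠ root := by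
  obtain ⟨h₁, h₂, h₃, h₄, -⟩ := hp
  cases b <;> simp only [SternBrocot.child, root, ne_eq, Prod.ext_iff, Prod.fst_add,
    Prod.snd_add] <;> omega

lemma child_eq_child_iff {q : Pair} (hp : IsPosBasis p) (hq : IsPosBasis q) {b c : Bool} :
    SternBrocot.child b p = SternBrocot.child c q ↔ b = c ∧ p = q := by
  refine ⟨fun h ↦ ?_, fun ⟨hbc, hpq⟩ ↦ hbc ▸ hpq ▸ rfl⟩
  have := hp.fst_pos; have := hp.snd_pos; have := hq.fst_pos; have := hq.snd_pos
  obtain ⟨h₁, h₂, h₃, h₄, -⟩ := hp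
  obtain ⟨h₅, h₆, h₇, h₈, -⟩ := hq
  cases b <;> cases c <;>
    simp only [SternBrocot.child, Prod.ext_iff, Prod.fst_add, Prod.snd_add, Bool.false_eq_true,
      Bool.true_eq_false, true_and, false_and] at h ⊢ <;> omega

lemma le_or_le (hp : IsPosBasis p) (hne : p ≠ root) :
    (p.1.1 ≤ p.2.1 ∧ p.1.2 ≤ p.2.2) ∨ (p.2.1 ≤ p.1.1 ∧ p.2.2 ≤ p.1.2) := by
  obtain ⟨⟨x₁, x₂⟩, ⟨y₁, y₂⟩⟩ := p
  obtain ⟨h₁, h₂, h₃, h₄, hdet⟩ := hp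
  simp only at *
  by_contra! hc
  rcases lt_trichotomy x₁ y₁ with hlt | rfl | hgt
  · have := hc.1 hlt.le
    nlinarith [mul_le_mul_of_nonneg_right hlt.le h₄, mul_le_mul_of_nonneg_left this.le h₃]
  · linarith [hc.1 le_rfl, hc.2 le_rfl]
  · have := hc.2 hgt.le
    obtain ⟨rfl, rfl⟩ : y₁ = 0 ∧ x₂ = 0 := by constructor <;> nlinarith
    have : x₁ = 1 ∧ y₂ = 1 := by constructor <;> nlinarith
    exact hne (by simp [root, this])

lemma exists_child_eq (hp : IsPosBasis p) (hne : p ≠ root) :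
    ∃ b q, IsPosBasis q ∧ SternBrocot.child b q = p := by
  have hcmp := hp.le_or_le hne
  obtain ⟨h₁, h₂, h₃, h₄, hdet⟩ := hp
  rcases hcmp with ⟨hx, hy⟩ | ⟨hx, hy⟩
  · refine ⟨true, (p.1, p.2 - p.1), ⟨h₁, h₂, by simpa, by simpa, ?_⟩, by simp [SternBrocot.child]⟩
    simp only [Prod.fst_sub, Prod.snd_sub]
    linear_combination hdet
  · refine ⟨false, (p.1 - p.2, p.2), ⟨by simpa, by simpa, h₃, h₄, ?_⟩, by simp [SternBrocot.child]⟩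
    simp only [Prod.fst_sub, Prod.snd_sub]
    linear_combination hdet

end IsPosBasis

lemma walk_root_injective : Function.Injective (walk · root) := by
  intro w
  induction w with
  | nil =>
    rintro (_ | ⟨c, w'⟩) h
    · rfl
    · exact absurd h.symm ((isPosBasis_root.walk w').child_ne_root c)
  | cons b w ih =>
    rintro (_ | ⟨c, w'⟩) h
    · exact absurd h ((isPosBasis_root.walk w).child_ne_root b)
    · obtain ⟨rfl, hw⟩ :=
        ((isPosBasis_root.walk w).child_eq_child_iff (isPosBasis_root.walk w')).1 h
      rw [ih hw]

lemma exists_walk_root {p : Pair} (hp : IsPosBasis p) : ∃ w, walk w root = p := by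
  by_cases hroot : p = root
  · exact ⟨[], hroot.symm⟩
  obtain ⟨b, q, hq, hqp⟩ := hp.exists_child_eq hroot
  obtain ⟨w, hw⟩ := exists_walk_root hq
  exact ⟨b :: w, by rw [walk_cons, hw, hqp]⟩
termination_by (p.1.1 + p.1.2 + p.2.1 + p.2.2).toNat
decreasing_by
  have := hq.fst_pos; have := hq.snd_pos
  subst hqp
  cases b <;> simp only [child, Prod.fst_add, Prod.snd_add] <;> omega

noncomputable def walkEquiv : List Bool ≃ {p // IsPosBasis p} :=
  Equiv.ofBijective (fun w ↦ ⟨walk w root, isPosBasis_root.walk w⟩)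
    ⟨fun _ _ h ↦ walk_root_injective (congrArg Subtype.val h),
      fun p ↦ (exists_walk_root p.2).imp fun _ h ↦ Subtype.ext h⟩

lemma walkEquiv_apply (w : List Bool) : (walkEquiv w : Pair) = walk w root := rfl

def dot (v w : ℤ × ℤ) : ℤ := v.1 * w.1 + v.2 * w.2

lemma dot_child_true (p : Pair) :
    dot (child true p).1 (child true p).2 = dot p.1 p.2 + dot p.1 p.1 := by
  simp only [child, dot, Prod.fst_add, Prod.snd_add]
  ring

lemma dot_child_false (p : Pair) :
    dot (child false p).1 (child false p).2 = dot p.1 p.2 + dot p.2 p.2 := by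
  simp only [child, dot, Prod.fst_add, Prod.snd_add]
  ring

lemma dot_root : dot root.1 root.2 = 0 := rfl

namespace IsPosBasis

variable {p : Pair}

lemma dot_nonneg (hp : IsPosBasis p) : 0 ≤ dot p.1 p.2 := by
  obtain ⟨h₁, h₂, h₃, h₄, -⟩ := hp
  unfold dot
  positivity

lemma one_le_dot_fst (hp : IsPosBasis p) : 1 ≤ dot p.1 p.1 := by
  have := hp.fst_pos
  unfold dot
  nlinarith [Int.le_self_sq p.1.1, Int.le_self_sq p.1.2]

lemma one_le_dot_snd (hp : IsPosBasis p) : 1 ≤ dot p.2 p.2 := by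
  have := hp.snd_pos
  unfold dot
  nlinarith [Int.le_self_sq p.2.1, Int.le_self_sq p.2.2]

lemma dot_mul_dot (hp : IsPosBasis p) : dot p.1 p.1 * dot p.2 p.2 = dot p.1 p.2 ^ 2 + 1 := by
  obtain ⟨-, -, -, -, hdet⟩ := hp
  unfold dot
  linear_combination (p.1.1 * p.2.2 - p.1.2 * p.2.1 + 1) * hdet

lemma le_dot_walk (hp : IsPosBasis p) (w : List Bool) :
    dot p.1 p.2 + w.length ≤ dot (SternBrocot.walk w p).1 (SternBrocot.walk w p).2 := by
  induction w with
  | nil => simp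
  | cons b w ih =>
    have hw := hp.walk w
    cases b
    · have := hw.one_le_dot_snd
      rw [walk_cons, dot_child_false, List.length_cons]
      omega
    · have := hw.one_le_dot_fst
      rw [walk_cons, dot_child_true, List.length_cons]
      omega

end IsPosBasis

def toC (v : ℤ × ℤ) : ℂ := ⟨v.1, v.2⟩

lemma toC_add (v w : ℤ × ℤ) : toC (v + w) = toC v + toC w := by
  apply Complex.ext <;> simp [toC]

lemma norm_toC (v : ℤ × ℤ) : ‖toC v‖ = √((v.1 : ℝ) ^ 2 + (v.2 : ℝ) ^ 2) := by
  rw [toC, Complex.norm_def, Complex.normSq_mk, sq, sq]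

lemma inner_toC (v w : ℤ × ℤ) : ⟪toC v, toC w⟫ = dot v w := by
  simp only [Complex.inner, toC, dot, Complex.mul_re, Complex.conj_re, Complex.conj_im]
  push_cast
  ring

/-- For a pair of determinant one this is the angle between its two vectors. -/
noncomputable def angle (p : Pair) : ℝ := arccot (dot p.1 p.2)

noncomputable def tanHalfAngle (p : Pair) : ℝ := tanHalfArccot (dot p.1 p.2)

noncomputable def summand (p : Pair) : ℝ := (‖toC p.1‖ + ‖toC p.2‖ - ‖toC (p.1 + p.2)‖) ^ 2

lemma two_mul_tanHalfAngle_le {p : Pair} {n : ℕ} (hn : n ≤ dot p.1 p.2) :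
    2 * tanHalfAngle p ≤ angle p + 2 * tanHalfAngle p / (3 * (1 + n) ^ 2) := by
  have hn' : (n : ℝ) ≤ dot p.1 p.2 := by exact_mod_cast hn
  rw [angle, tanHalfAngle]
  refine (two_mul_tanHalfArccot_le (by linarith [n.cast_nonneg (α := ℝ)])).trans ?_
  gcongr
  linarith [tanHalfArccot_pos (dot p.1 p.2)]

namespace IsPosBasis

variable {p : Pair}

lemma tanHalfAngle_eq (hp : IsPosBasis p) :
    tanHalfAngle p = ‖toC p.1‖ * ‖toC p.2‖ - ⟪toC p.1, toC p.2⟫ := by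
  rw [norm_toC, norm_toC, ← sqrt_mul (by positivity), inner_toC, tanHalfAngle, tanHalfArccot]
  have := congrArg (Int.cast : ℤ → ℝ) hp.dot_mul_dot
  push_cast [dot] at this ⊢
  congr 2
  linear_combination -this

lemma summand_eq (hp : IsPosBasis p) :
    summand p = 2 * tanHalfAngle p
      - (2 * tanHalfAngle (SternBrocot.child true p)
        + 2 * tanHalfAngle (SternBrocot.child false p)) := by
  rw [hp.tanHalfAngle_eq, (hp.child true).tanHalfAngle_eq, (hp.child false).tanHalfAngle_eq,
    summand, toC_add, sq_norm_add_norm_sub_norm_add]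
  simp only [SternBrocot.child, toC_add]
  ring

lemma angle_eq_add (hp : IsPosBasis p) :
    angle p = angle (SternBrocot.child true p) + angle (SternBrocot.child false p) := by
  have hdot := congrArg (Int.cast : ℤ → ℝ) hp.dot_mul_dot
  have h₁ : (1 : ℝ) ≤ dot p.1 p.1 := by exact_mod_cast hp.one_le_dot_fst
  have h₂ : (1 : ℝ) ≤ dot p.2 p.2 := by exact_mod_cast hp.one_le_dot_snd
  have h₀ : (0 : ℝ) ≤ dot p.1 p.2 := by exact_mod_cast hp.dot_nonneg
  push_cast at hdot
  rw [angle, angle, angle, dot_child_true, dot_child_false]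
  push_cast
  exact arccot_eq_arccot_add_arccot h₀ (by linarith) (by linarith) (by linear_combination hdot)

lemma angle_le (hp : IsPosBasis p) : angle p ≤ 2 * tanHalfAngle p :=
  arccot_le_two_mul_tanHalfArccot (by exact_mod_cast hp.dot_nonneg)

end IsPosBasis

noncomputable def levelSum (g : Pair → ℝ) (n : ℕ) (p : Pair) : ℝ :=
  ∑ v : Fin n → Bool, g (walk (List.ofFn v) p)

lemma levelSum_zero (g : Pair → ℝ) (p : Pair) : levelSum g 0 p = g p := by
  simp [levelSum]

lemma levelSum_succ (g : Pair → ℝ) (n : ℕ) (p : Pair) :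
    levelSum g (n + 1) p = levelSum (fun q ↦ g (child true q) + g (child false q)) n p := by
  rw [levelSum, ← (Fin.consEquiv fun _ ↦ Bool).sum_comp, Fintype.sum_prod_type, Fintype.sum_bool,
    levelSum, ← Finset.sum_add_distrib]
  simp [Fin.consEquiv, List.ofFn_succ]

lemma levelSum_congr {g g' : Pair → ℝ} (hg : ∀ q, IsPosBasis q → g q = g' q) {p : Pair}
    (hp : IsPosBasis p) (n : ℕ) : levelSum g n p = levelSum g' n p :=
  Finset.sum_congr rfl fun _ _ ↦ hg _ (hp.walk _)

lemma levelSum_eq_self {g : Pair → ℝ}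
    (hg : ∀ q, IsPosBasis q → g q = g (child true q) + g (child false q)) {p : Pair}
    (hp : IsPosBasis p) (n : ℕ) : levelSum g n p = g p := by
  induction n with
  | zero => exact levelSum_zero g p
  | succ n ih => rw [levelSum_succ, ← levelSum_congr hg hp, ih]

lemma sum_range_levelSum {f h : Pair → ℝ}
    (hf : ∀ q, IsPosBasis q → f q = h q - (h (child true q) + h (child false q))) {p : Pair}
    (hp : IsPosBasis p) (n : ℕ) : ∑ k ∈ Finset.range n, levelSum f k p = h p - levelSum h n p := by
  have hk (k : ℕ) : levelSum f k p = levelSum h k p - levelSum h (k + 1) p := by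
    rw [levelSum_congr hf hp, levelSum_succ]
    exact Finset.sum_sub_distrib ..
  simp_rw [hk]
  rw [Finset.sum_range_sub', levelSum_zero]

lemma levelSum_angle_root (n : ℕ) : levelSum angle n root = π / 2 := by
  rw [levelSum_eq_self (fun _ hq ↦ hq.angle_eq_add) isPosBasis_root, angle, dot_root]
  simp [arccot]

lemma sum_range_levelSum_summand_root (n : ℕ) :
    ∑ k ∈ Finset.range n, levelSum summand k root
      = 2 - levelSum (fun q ↦ 2 * tanHalfAngle q) n root := by
  rw [sum_range_levelSum (fun _ hq ↦ hq.summand_eq) isPosBasis_root, tanHalfAngle, dot_root]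
  simp [tanHalfArccot]

lemma pi_div_two_le_levelSum_root (n : ℕ) :
    π / 2 ≤ levelSum (fun q ↦ 2 * tanHalfAngle q) n root := by
  rw [← levelSum_angle_root n]
  exact Finset.sum_le_sum fun _ _ ↦ (isPosBasis_root.walk _).angle_le

lemma levelSum_root_le (n : ℕ) :
    levelSum (fun q ↦ 2 * tanHalfAngle q) n root ≤ π / 2 + 1 / (n + 1) := by
  set S := levelSum (fun q ↦ 2 * tanHalfAngle q) n root
  have hS : S ≤ 2 := by
    have := sum_range_levelSum_summand_root n
    have : 0 ≤ ∑ k ∈ Finset.range n, levelSum summand k root :=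
      Finset.sum_nonneg fun _ _ ↦ Finset.sum_nonneg fun _ _ ↦ sq_nonneg _
    linarith
  have hS' : S ≤ π / 2 + S / (3 * (1 + n) ^ 2) := by
    rw [← levelSum_angle_root n]
    simp only [S, levelSum, Finset.sum_div, ← Finset.sum_add_distrib]
    refine Finset.sum_le_sum fun v _ ↦ two_mul_tanHalfAngle_le ?_
    simpa [dot_root] using isPosBasis_root.le_dot_walk (List.ofFn v)
  have : S / (3 * (1 + n) ^ 2) ≤ 1 / (n + 1) := by
    rw [div_le_div_iff₀ (by positivity) (by positivity)]
    nlinarith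
  linarith

lemma hasSum_levelSum_summand_root :
    HasSum (fun n ↦ levelSum summand n root) (2 - π / 2) := by
  rw [hasSum_iff_tendsto_nat_of_nonneg (f := fun n ↦ levelSum summand n root)
    (fun _ ↦ Finset.sum_nonneg fun _ _ ↦ sq_nonneg _)]
  simp_rw [sum_range_levelSum_summand_root]
  refine tendsto_const_nhds.sub (tendsto_of_tendsto_of_tendsto_of_le_of_le tendsto_const_nhds
    (by simpa using tendsto_const_nhds.add (tendsto_one_div_add_atTop_nhds_zero_nat (𝕜 := ℝ)))
    pi_div_two_le_levelSum_root levelSum_root_le)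

lemma hasSum_summand : HasSum (fun p : {p // IsPosBasis p} ↦ summand p.1) (2 - π / 2) := by
  refine walkEquiv.hasSum_iff.1 ?_
  simp only [Function.comp_def, walkEquiv_apply]
  rw [← List.equivSigmaTuple.symm.hasSum_iff]
  exact hasSum_sigma_of_nonneg (fun _ ↦ sq_nonneg _) hasSum_levelSum_summand_root

end SternBrocot

theorem stmt9 :
    (∑' p : {p : (ℤ × ℤ) × (ℤ × ℤ) //
        0 ≤ p.1.1 ∧ 0 ≤ p.1.2 ∧ 0 ≤ p.2.1 ∧ 0 ≤ p.2.2 ∧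
        p.1.1 * p.2.2 - p.1.2 * p.2.1 = 1},
      (Real.sqrt ((p.1.1.1 : ℝ) ^ 2 + (p.1.1.2 : ℝ) ^ 2)
        + Real.sqrt ((p.1.2.1 : ℝ) ^ 2 + (p.1.2.2 : ℝ) ^ 2)
        - Real.sqrt (((p.1.1.1 : ℝ) + p.1.2.1) ^ 2 + ((p.1.1.2 : ℝ) + p.1.2.2) ^ 2)) ^ 2)
      = 2 - Real.pi / 2 := by
  have h := SternBrocot.hasSum_summand.tsum_eq
  simp only [SternBrocot.summand, SternBrocot.norm_toC, Prod.fst_add, Prod.snd_add,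
    Int.cast_add] at h
  exact h
end

section
/- Let Λ = ℤ·i + ℤ ⊂ ℂ be the Gaussian integer lattice. The sum of 1/|ω₁ω₂ω₃|² over all triples (ω₁,ω₂,ω₃) of nonzero elements of Λ with ω₁+ω₂+ω₃ = 0 and ω₁, ω₂ ℝ-linearly dependent (collinear triples) equals 2·E(i,3), where E(i,3) = (1/2)·Σ'_{(m,n)∈ℤ²∖{0}} 1/|mi+n|⁶. -/
open Function Set

/-- Lattice point `(m, n) ↦ m·i + n` squared modulus. -/
noncomputable def nsq (p : ℤ × ℤ) : ℝ := (p.1 : ℝ) ^ 2 + (p.2 : ℝ) ^ 2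

def Ppos (d : ℤ × ℤ) : Prop := 0 < d.1 ∨ (d.1 = 0 ∧ 0 < d.2)

def PPset : Set (ℤ × ℤ) := {d | Int.gcd d.1 d.2 = 1 ∧ Ppos d}

def Wset : Set (ℤ × ℤ) := {ab | ab.1 ≠ 0 ∧ ab.2 ≠ 0 ∧ ab.1 + ab.2 ≠ 0}

def Dset : Set (ℤ × ℤ) := {ab | ab.1 ≠ 0 ∧ ab.2 = -ab.1}

lemma Ppos.ne_zero {d : ℤ × ℤ} (h : Ppos d) : d ≠ 0 := by
  rintro rfl
  simp [Ppos] at h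

lemma Ppos.not_neg {d : ℤ × ℤ} (h : Ppos d) : ¬ Ppos (-d) := by
  intro h'
  simp only [Ppos, Prod.fst_neg, Prod.snd_neg] at h h'
  omega

lemma Ppos.or_neg {d : ℤ × ℤ} (h : d ≠ 0) : Ppos d ∨ Ppos (-d) := by
  have h12 : d.1 ≠ 0 ∨ d.2 ≠ 0 := by
    by_contra hc; push_neg at hc; exact h (Prod.ext hc.1 hc.2)
  simp only [Ppos, Prod.fst_neg, Prod.snd_neg]
  omega

lemma div_lemma {d w : ℤ × ℤ} (h1 : Int.gcd d.1 d.2 = 1)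
    (h : d.1 * w.2 - d.2 * w.1 = 0) : ∃ b : ℤ, w = (b * d.1, b * d.2) := by
  obtain ⟨u, v, huv⟩ := Int.isCoprime_iff_gcd_eq_one.mpr h1
  refine ⟨u * w.1 + v * w.2, Prod.ext ?_ ?_⟩
  · show w.1 = _
    linear_combination (-w.1) * huv - v * h
  · show w.2 = _
    linear_combination (-w.2) * huv + u * h

lemma exists_rep0 {w : ℤ × ℤ} (hw : w ≠ 0) :
    ∃ a : ℤ, ∃ d : ℤ × ℤ, a ≠ 0 ∧ Int.gcd d.1 d.2 = 1 ∧ w = (a * d.1, a * d.2) := by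
  have hg0 : Int.gcd w.1 w.2 ≠ 0 := by
    intro hz
    rw [Int.gcd_eq_zero_iff] at hz
    exact hw (Prod.ext hz.1 hz.2)
  refine ⟨(Int.gcd w.1 w.2 : ℤ), (w.1 / (Int.gcd w.1 w.2 : ℤ), w.2 / (Int.gcd w.1 w.2 : ℤ)),
    Int.natCast_ne_zero.mpr hg0, Int.gcd_div_gcd_div_gcd (Nat.pos_of_ne_zero hg0), ?_⟩
  have e1 := Int.mul_ediv_cancel' (Int.gcd_dvd_left (a := w.1) (b := w.2))
  have e2 := Int.mul_ediv_cancel' (Int.gcd_dvd_right (a := w.1) (b := w.2))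
  exact Prod.ext e1.symm e2.symm

lemma exists_rep {w : ℤ × ℤ} (hw : w ≠ 0) :
    ∃ a : ℤ, ∃ d : ℤ × ℤ, a ≠ 0 ∧ d ∈ PPset ∧ w = (a * d.1, a * d.2) := by
  obtain ⟨a, d, ha, hgcd, hwad⟩ := exists_rep0 hw
  have hd : d ≠ 0 := by
    rintro rfl
    simp [Int.gcd] at hgcd
  rcases Ppos.or_neg hd with hp | hp
  · exact ⟨a, d, ha, ⟨hgcd, hp⟩, hwad⟩
  · refine ⟨-a, -d, neg_ne_zero.mpr ha, ⟨by simpa [Int.gcd] using hgcd, hp⟩, ?_⟩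
    rw [hwad]
    exact Prod.ext (by simp) (by simp)

lemma unique_rep {a a' : ℤ} {d d' : ℤ × ℤ} (ha : a ≠ 0) (ha' : a' ≠ 0)
    (hd : d ∈ PPset) (hd' : d' ∈ PPset)
    (h : ((a * d.1, a * d.2) : ℤ × ℤ) = (a' * d'.1, a' * d'.2)) : a = a' ∧ d = d' := by
  obtain ⟨hg, hp⟩ := hd
  obtain ⟨hg', hp'⟩ := hd'
  have h1 : a * d.1 = a' * d'.1 := congrArg Prod.fst h
  have h2 : a * d.2 = a' * d'.2 := congrArg Prod.snd h
  have hcross : d.1 * d'.2 - d.2 * d'.1 = 0 := by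
    have : a * a' * (d.1 * d'.2 - d.2 * d'.1) = 0 := by linear_combination (a * d.2) * h1 - (a * d.1) * h2
    have haa : a * a' ≠ 0 := mul_ne_zero ha ha'
    exact (mul_eq_zero.mp this).resolve_left haa
  obtain ⟨t, ht⟩ := div_lemma hg hcross
  have ht1 : d'.1 = t * d.1 := congrArg Prod.fst ht
  have ht2 : d'.2 = t * d.2 := congrArg Prod.snd ht
  have htabs : t.natAbs = 1 := by
    have : Int.gcd (t * d.1) (t * d.2) = 1 := by rw [← ht1, ← ht2]; exact hg'
    rwa [Int.gcd_mul_left, hg, mul_one] at this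
  have ht' : t = 1 ∨ t = -1 := Int.natAbs_eq_iff.mp htabs |>.imp (by simp) (by simp)
  have htone : t = 1 := by
    rcases ht' with rfl | rfl
    · rfl
    · exfalso
      apply Ppos.not_neg hp
      have : d' = -d := Prod.ext (by simpa using ht1) (by simpa using ht2)
      rwa [this] at hp'
  subst htone
  have hdd : d = d' := Prod.ext (by simpa using ht1.symm) (by simpa using ht2.symm)
  subst hdd
  constructor
  · have hdne : d.1 ≠ 0 ∨ d.2 ≠ 0 := by
      by_contra hc; push_neg at hc; exact Ppos.ne_zero hp (Prod.ext hc.1 hc.2)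
    rcases hdne with h0 | h0
    · exact mul_right_cancel₀ h0 h1
    · exact mul_right_cancel₀ h0 h2
  · rfl

lemma PPset.ne_zero {d : ℤ × ℤ} (h : d ∈ PPset) : d ≠ 0 := Ppos.ne_zero h.2

lemma scaled_ne_zero {a : ℤ} {d : ℤ × ℤ} (ha : a ≠ 0) (hd : d ≠ 0) :
    ((a * d.1, a * d.2) : ℤ × ℤ) ≠ 0 := by
  intro h
  rw [Prod.ext_iff] at h
  simp only [Prod.fst_zero, Prod.snd_zero, mul_eq_zero] at h
  exact hd (Prod.ext (h.1.resolve_left ha) (h.2.resolve_left ha))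

abbrev Tsub := {w : (ℤ × ℤ) × (ℤ × ℤ) × (ℤ × ℤ) //
        w.1 ≠ 0 ∧ w.2.1 ≠ 0 ∧ w.2.2 ≠ 0 ∧ w.1 + w.2.1 + w.2.2 = 0 ∧
        w.1.1 * w.2.1.2 - w.1.2 * w.2.1.1 = 0}

noncomputable def e1 : (↥Wset × ↥PPset) ≃ Tsub := by
  apply Equiv.ofBijective (f := fun x =>
    ⟨((x.1.1.1 * x.2.1.1, x.1.1.1 * x.2.1.2), (x.1.1.2 * x.2.1.1, x.1.1.2 * x.2.1.2),
      (-(x.1.1.1 + x.1.1.2) * x.2.1.1, -(x.1.1.1 + x.1.1.2) * x.2.1.2)),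
     by
      obtain ⟨⟨⟨a, b⟩, ha, hb, hab⟩, ⟨d, hd⟩⟩ := x
      have hdz := PPset.ne_zero hd
      refine ⟨scaled_ne_zero ha hdz, scaled_ne_zero hb hdz,
        scaled_ne_zero (neg_ne_zero.mpr hab) hdz, ?_, by ring⟩
      rw [Prod.ext_iff]
      constructor <;> simp <;> ring⟩)
  constructor
  · rintro ⟨⟨⟨a, b⟩, hw⟩, ⟨d, hd⟩⟩ ⟨⟨⟨a', b'⟩, hw'⟩, ⟨d', hd'⟩⟩ h
    simp only [Subtype.mk.injEq, Prod.mk.injEq] at h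
    obtain ⟨⟨h11, h12⟩, ⟨h21, h22⟩, _⟩ := h
    obtain ⟨hae, hde⟩ := unique_rep hw.1 hw'.1 hd hd'
      (Prod.ext (by simpa using h11) (by simpa using h12))
    subst hde
    obtain ⟨hbe, -⟩ := unique_rep hw.2.1 hw'.2.1 hd hd'
      (Prod.ext (by simpa using h21) (by simpa using h22))
    subst hae; subst hbe
    rfl
  · rintro ⟨⟨w1, w2, w3⟩, h1, h2, h3, hsum, hcross⟩
    obtain ⟨a, d, ha, hd, hw1⟩ := exists_rep h1
    have hcross' : d.1 * w2.2 - d.2 * w2.1 = 0 := by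
      have hw11 : w1.1 = a * d.1 := congrArg Prod.fst hw1
      have hw12 : w1.2 = a * d.2 := congrArg Prod.snd hw1
      have : a * (d.1 * w2.2 - d.2 * w2.1) = 0 := by
        linear_combination hcross - w2.2 * hw11 + w2.1 * hw12
      exact (mul_eq_zero.mp this).resolve_left ha
    obtain ⟨b, hw2⟩ := div_lemma hd.1 hcross'
    have hb : b ≠ 0 := by
      rintro rfl
      apply h2
      rw [hw2]
      simp
    have hsum1 : w1.1 + w2.1 + w3.1 = 0 := by
      have := congrArg Prod.fst hsum; simpa using this
    have hsum2 : w1.2 + w2.2 + w3.2 = 0 := by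
      have := congrArg Prod.snd hsum; simpa using this
    have hw31 : w3.1 = -(a + b) * d.1 := by
      have e1 : w1.1 = a * d.1 := congrArg Prod.fst hw1
      have e2 : w2.1 = b * d.1 := congrArg Prod.fst hw2
      linear_combination hsum1 - e1 - e2
    have hw32 : w3.2 = -(a + b) * d.2 := by
      have e1 : w1.2 = a * d.2 := congrArg Prod.snd hw1
      have e2 : w2.2 = b * d.2 := congrArg Prod.snd hw2
      linear_combination hsum2 - e1 - e2
    have hab : a + b ≠ 0 := by
      intro h0
      apply h3
      rw [Prod.ext_iff]
      simp [hw31, hw32, h0]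
    have hw1' : w1 = (a * d.1, a * d.2) := hw1
    refine ⟨⟨⟨(a, b), ha, hb, hab⟩, ⟨d, hd⟩⟩, ?_⟩
    apply Subtype.ext
    simp only
    refine Prod.ext ?_ (Prod.ext ?_ ?_) <;> rw [Prod.ext_iff] <;>
      simp [hw1', hw2, hw31, hw32]

noncomputable def e2 : ({k : ℤ // k ≠ 0} × ↥PPset) ≃ {p : ℤ × ℤ // p ≠ 0} := by
  apply Equiv.ofBijective (f := fun x =>
    ⟨(x.1.1 * x.2.1.1, x.1.1 * x.2.1.2),
      scaled_ne_zero x.1.2 (PPset.ne_zero x.2.2)⟩)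
  constructor
  · rintro ⟨⟨k, hk⟩, ⟨d, hd⟩⟩ ⟨⟨k', hk'⟩, ⟨d', hd'⟩⟩ h
    simp only [Subtype.mk.injEq, Prod.mk.injEq] at h
    obtain ⟨hke, hde⟩ := unique_rep hk hk' hd hd' (Prod.ext (by simpa using h.1) (by simpa using h.2))
    subst hke; subst hde; rfl
  · rintro ⟨p, hp⟩
    obtain ⟨a, d, ha, hd, hpad⟩ := exists_rep hp
    exact ⟨⟨⟨a, ha⟩, ⟨d, hd⟩⟩, by apply Subtype.ext; simp [hpad]⟩

noncomputable def u2 : ℤ × ℤ → ℝ := fun ab => (1/(ab.1 : ℝ)^3) * (1/(ab.2 : ℝ)^3)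
noncomputable def gW : ℤ × ℤ → ℝ := fun ab => 1/((ab.1 : ℝ)^2 * (ab.2 : ℝ)^2 * ((ab.1 : ℝ) + (ab.2 : ℝ))^2)

lemma s2 : Summable fun k : ℤ => 1/(k : ℝ)^2 := Real.summable_one_div_int_pow.mpr one_lt_two
lemma s6 : Summable fun k : ℤ => 1/(k : ℝ)^6 := Real.summable_one_div_int_pow.mpr (by norm_num)

lemma one_le_sq_cast {k : ℤ} (hk : k ≠ 0) : (1 : ℝ) ≤ (k : ℝ)^2 := by
  have : (1 : ℤ) ≤ k^2 := by nlinarith [sq_nonneg k, Int.one_le_abs hk, sq_abs k]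
  exact_mod_cast this

lemma sum_n3 : Summable fun k : ℤ => ‖1/(k : ℝ)^3‖ := by
  apply s2.of_nonneg_of_le (fun k => norm_nonneg _)
  intro k
  rcases eq_or_ne k 0 with rfl | hk
  · simp
  · have hkR : (k : ℝ) ≠ 0 := Int.cast_ne_zero.mpr hk
    have h1 : (1 : ℝ) ≤ |(k : ℝ)| := by
      rw [← Int.cast_abs]
      exact_mod_cast Int.one_le_abs hk
    rw [norm_div, norm_one, norm_pow, Real.norm_eq_abs]
    apply one_div_le_one_div_of_le (by positivity)
    calc ((k : ℝ))^2 = |(k : ℝ)|^2 := (sq_abs _).symm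
      _ ≤ |(k : ℝ)|^2 * |(k : ℝ)| := le_mul_of_one_le_right (by positivity) h1
      _ = |(k : ℝ)|^3 := by ring

lemma s3 : Summable fun k : ℤ => 1/(k : ℝ)^3 := sum_n3.of_norm

lemma sum_u2 : Summable u2 := by
  unfold u2
  exact summable_mul_of_summable_norm (f := fun k : ℤ => 1/(k : ℝ)^3)
    (g := fun k : ℤ => 1/(k : ℝ)^3) sum_n3 sum_n3

lemma tsum_z3 : ∑' k : ℤ, 1/(k : ℝ)^3 = 0 := by
  have h := (Equiv.neg ℤ).tsum_eq (fun k : ℤ => 1/(k : ℝ)^3)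
  simp only [Equiv.neg_apply, Int.cast_neg] at h
  have h2 : ∀ k : ℤ, 1/(-(k : ℝ))^3 = -(1/(k : ℝ)^3) := fun k => by ring
  rw [tsum_congr h2, tsum_neg] at h
  linarith

lemma tsum_u2 : ∑' ab : ℤ × ℤ, u2 ab = 0 := by
  have h := tsum_mul_tsum_of_summable_norm sum_n3 sum_n3
  rw [tsum_z3, mul_zero] at h
  exact h.symm

lemma u2_split (ab : ℤ × ℤ) :
    u2 ab = Wset.indicator u2 ab + Dset.indicator u2 ab := by
  by_cases h1 : ab.1 = 0
  · have hW : ab ∉ Wset := fun h => h.1 h1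
    have hD : ab ∉ Dset := fun h => h.1 h1
    rw [indicator_of_notMem hW, indicator_of_notMem hD, u2, h1]
    simp
  by_cases h2 : ab.2 = 0
  · have hW : ab ∉ Wset := fun h => h.2.1 h2
    have hD : ab ∉ Dset := by rintro ⟨hh1, hh2⟩; omega
    rw [indicator_of_notMem hW, indicator_of_notMem hD, u2, h2]
    simp
  by_cases h3 : ab.1 + ab.2 = 0
  · have hW : ab ∉ Wset := fun h => h.2.2 h3
    have hD : ab ∈ Dset := ⟨h1, by omega⟩
    rw [indicator_of_notMem hW, indicator_of_mem hD]
    ring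
  · have hW : ab ∈ Wset := ⟨h1, h2, h3⟩
    have hD : ab ∉ Dset := by rintro ⟨hh1, hh2⟩; omega
    rw [indicator_of_mem hW, indicator_of_notMem hD]
    ring

lemma tsum_uW : ∑' ab : ↥Wset, u2 ab = ∑' k : {k : ℤ // k ≠ 0}, 1/((k : ℤ) : ℝ)^6 := by
  have hW : Summable (Wset.indicator u2) := sum_u2.indicator _
  have hD : Summable (Dset.indicator u2) := sum_u2.indicator _
  have h0 : ∑' ab, Wset.indicator u2 ab + ∑' ab, Dset.indicator u2 ab = 0 := by
    rw [← Summable.tsum_add hW hD, ← tsum_congr u2_split, tsum_u2]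
  have hinj : Injective (fun k : {k : ℤ // k ≠ 0} => ((k.1, -k.1) : ℤ × ℤ)) := by
    intro x y h
    simp only [Prod.mk.injEq] at h
    exact Subtype.ext h.1
  have hsupp : support (Dset.indicator u2) ⊆
      range (fun k : {k : ℤ // k ≠ 0} => ((k.1, -k.1) : ℤ × ℤ)) := by
    intro ab hab
    have hmem : ab ∈ Dset := by
      by_contra hc
      exact hab (indicator_of_notMem hc u2)
    obtain ⟨ha0, hab⟩ := hmem
    rw [mem_range]
    refine ⟨⟨ab.1, ha0⟩, ?_⟩
    show ((ab.1, -ab.1) : ℤ × ℤ) = ab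
    exact Prod.ext rfl hab.symm
  have hDval : ∑' ab, Dset.indicator u2 ab = - ∑' k : {k : ℤ // k ≠ 0}, 1/((k : ℤ) : ℝ)^6 := by
    rw [← hinj.tsum_eq hsupp]
    have hpt : ∀ k : {k : ℤ // k ≠ 0},
        Dset.indicator u2 ((k.1, -k.1) : ℤ × ℤ) = -(1/((k : ℤ) : ℝ)^6) := by
      intro k
      have hm : ((k.1, -k.1) : ℤ × ℤ) ∈ Dset := ⟨k.2, rfl⟩
      rw [indicator_of_mem hm]
      show (1/((k.1 : ℤ) : ℝ)^3) * (1/(((-k.1 : ℤ)) : ℝ)^3) = _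
      push_cast
      ring
    rw [tsum_congr hpt, tsum_neg]
  rw [tsum_subtype Wset u2]
  linarith

def sigmaW : ↥Wset ≃ ↥Wset where
  toFun x := ⟨(x.1.2, -(x.1.1 + x.1.2)), by
    obtain ⟨⟨a, b⟩, h⟩ := x
    have h1 : a ≠ 0 := h.1
    have h2 : b ≠ 0 := h.2.1
    have h3 : a + b ≠ 0 := h.2.2
    exact ⟨h2, by show -(a + b) ≠ 0; omega, by show b + -(a + b) ≠ 0; omega⟩⟩
  invFun x := ⟨(-(x.1.1 + x.1.2), x.1.1), by
    obtain ⟨⟨a, b⟩, h⟩ := x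
    have h1 : a ≠ 0 := h.1
    have h2 : b ≠ 0 := h.2.1
    have h3 : a + b ≠ 0 := h.2.2
    exact ⟨by show -(a + b) ≠ 0; omega, h1, by show -(a + b) + a ≠ 0; omega⟩⟩
  left_inv x := Subtype.ext (Prod.ext (by simp) (by simp))
  right_inv x := Subtype.ext (Prod.ext (by simp) (by simp))

noncomputable def uW : ↥Wset → ℝ := fun x => u2 x.1

lemma real_key_identity {x y : ℝ} (hx : x ≠ 0) (hy : y ≠ 0) (hxy : x + y ≠ 0) :
    1/(x^2 * y^2 * (x + y)^2) = (1/3) * (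
      (1/x^3) * (1/y^3)
      + (1/y^3) * (1/(-(x + y))^3)
      + (1/(-(x + y))^3) * (1/(-(y + -(x + y)))^3)) := by
  have h1 : -(y + -(x + y)) = x := by ring
  rw [h1]
  have e : (-(x + y))^3 = -((x + y)^3) := by ring
  rw [e]
  simp only [div_neg, one_div]
  field_simp
  ring

lemma gW_pointwise (x : ↥Wset) :
    gW x.1 = (1/3) * (uW x + uW (sigmaW x) + uW (sigmaW (sigmaW x))) := by
  obtain ⟨⟨a, b⟩, h⟩ := x
  have h1 : a ≠ 0 := h.1
  have h2 : b ≠ 0 := h.2.1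
  have h3 : a + b ≠ 0 := h.2.2
  have haR : (a : ℝ) ≠ 0 := Int.cast_ne_zero.mpr h1
  have hbR : (b : ℝ) ≠ 0 := Int.cast_ne_zero.mpr h2
  have habR : (a : ℝ) + (b : ℝ) ≠ 0 := by
    intro hc; apply h3; exact_mod_cast hc
  show 1/((a : ℝ)^2 * (b : ℝ)^2 * ((a : ℝ) + (b : ℝ))^2) = (1/3) * (
    (1/(a : ℝ)^3) * (1/(b : ℝ)^3)
    + (1/(b : ℝ)^3) * (1/((-(a + b) : ℤ) : ℝ)^3)
    + (1/((-(a + b) : ℤ) : ℝ)^3) * (1/((-(b + -(a + b)) : ℤ) : ℝ)^3))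
  push_cast
  exact real_key_identity haR hbR habR

lemma key : ∑' x : ↥Wset, gW x.1 = ∑' k : {k : ℤ // k ≠ 0}, 1/((k : ℤ) : ℝ)^6 := by
  have suW : Summable uW := sum_u2.subtype Wset
  have s1 : Summable fun x => uW (sigmaW x) := (sigmaW.summable_iff (f := uW)).mpr suW
  have s2' : Summable fun x => uW (sigmaW (sigmaW x)) :=
    ((sigmaW.trans sigmaW).summable_iff (f := uW)).mpr suW
  have t1 : ∑' x, uW (sigmaW x) = ∑' x, uW x := sigmaW.tsum_eq uW
  have t2 : ∑' x, uW (sigmaW (sigmaW x)) = ∑' x, uW (sigmaW x) :=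
    sigmaW.tsum_eq (fun y => uW (sigmaW y))
  calc ∑' x : ↥Wset, gW x.1
      = ∑' x : ↥Wset, (1/3) * (uW x + uW (sigmaW x) + uW (sigmaW (sigmaW x))) :=
        tsum_congr gW_pointwise
    _ = (1/3) * ∑' x : ↥Wset, (uW x + uW (sigmaW x) + uW (sigmaW (sigmaW x))) := tsum_mul_left
    _ = (1/3) * (∑' x, uW x + ∑' x, uW (sigmaW x) + ∑' x, uW (sigmaW (sigmaW x))) := by
        rw [Summable.tsum_add (suW.add s1) s2', Summable.tsum_add suW s1]
    _ = ∑' x, uW x := by rw [t2, t1]; ring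
    _ = ∑' ab : ↥Wset, u2 ab := rfl
    _ = _ := tsum_uW


lemma nsq_nonneg (p : ℤ × ℤ) : 0 ≤ nsq p := by unfold nsq; positivity

lemma nsq_scale (a : ℤ) (d : ℤ × ℤ) : nsq (a * d.1, a * d.2) = (a : ℝ)^2 * nsq d := by
  unfold nsq
  push_cast
  ring

lemma norm_summable_of_nonneg {ι : Type*} {f : ι → ℝ} (hf : Summable f)
    (h0 : ∀ i, 0 ≤ f i) : Summable fun i => ‖f i‖ := by
  apply hf.congr
  intro i
  rw [Real.norm_eq_abs, abs_of_nonneg (h0 i)]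

lemma summable_prod_one_div_sq :
    Summable fun x : ℤ × ℤ => (1/(x.1 : ℝ)^2) * (1/(x.2 : ℝ)^2) := by
  have h0 : ∀ k : ℤ, 0 ≤ 1/(k : ℝ)^2 := fun k => by positivity
  exact Summable.mul_of_nonneg (f := fun k : ℤ => 1/(k : ℝ)^2)
    (g := fun k : ℤ => 1/(k : ℝ)^2) s2 s2 h0 h0

lemma sgW_glob : Summable gW := by
  apply summable_prod_one_div_sq.of_nonneg_of_le (fun ab => by unfold gW; positivity)
  intro ab
  by_cases h1 : ab.1 = 0
  · simp [gW, h1]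
  by_cases h2 : ab.2 = 0
  · simp [gW, h2]
  by_cases h3 : ab.1 + ab.2 = 0
  · have : ((ab.1 : ℝ) + (ab.2 : ℝ))^2 = 0 := by
      have : (ab.1 : ℝ) + (ab.2 : ℝ) = 0 := by exact_mod_cast congrArg (Int.cast : ℤ → ℝ) h3
      rw [this]; ring
    rw [gW]
    simp only [this, mul_zero, div_zero]
    positivity
  · rw [gW, one_div_mul_one_div]
    apply one_div_le_one_div_of_le
    · have e1 := one_le_sq_cast h1
      have e2 := one_le_sq_cast h2
      nlinarith
    · have h := one_le_sq_cast h3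
      push_cast at h
      have key : (ab.1 : ℝ)^2 * (ab.2 : ℝ)^2 * 1 ≤
          (ab.1 : ℝ)^2 * (ab.2 : ℝ)^2 * ((ab.1 : ℝ) + (ab.2 : ℝ))^2 :=
        mul_le_mul_of_nonneg_left h (by positivity)
      linarith

noncomputable def vz : ℤ → ℝ := fun k => if k = 0 then 1 else 0

lemma svz : Summable vz := by
  apply summable_of_ne_finset_zero (s := {(0 : ℤ)})
  intro k hk
  simp only [Finset.mem_singleton] at hk
  simp [vz, hk]

lemma snsq_glob : Summable fun p : ℤ × ℤ => 1/(nsq p)^3 := by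
  have h6 : ∀ k : ℤ, 0 ≤ 1/(k : ℝ)^6 := fun k => by positivity
  have hvz : ∀ k : ℤ, 0 ≤ vz k := fun k => by unfold vz; split <;> norm_num
  have hb2 : Summable fun x : ℤ × ℤ => (1/(x.1 : ℝ)^6) * vz x.2 :=
    Summable.mul_of_nonneg (f := fun k : ℤ => 1/(k : ℝ)^6) (g := vz) s6 svz h6 hvz
  have hb3 : Summable fun x : ℤ × ℤ => vz x.1 * (1/(x.2 : ℝ)^6) :=
    Summable.mul_of_nonneg (f := vz) (g := fun k : ℤ => 1/(k : ℝ)^6) svz s6 hvz h6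
  apply ((summable_prod_one_div_sq.add hb2).add hb3).of_nonneg_of_le
    (fun p => one_div_nonneg.mpr (pow_nonneg (nsq_nonneg p) 3))
  intro p
  by_cases h1 : p.1 = 0 <;> by_cases h2 : p.2 = 0
  · simp [nsq, h1, h2, vz]
  · have hnsq : nsq p = (p.2 : ℝ)^2 := by simp [nsq, h1]
    have e : ((p.2 : ℝ)^2)^3 = (p.2 : ℝ)^6 := by ring
    rw [hnsq, e]
    simp [vz, h1, h2]
  · have hnsq : nsq p = (p.1 : ℝ)^2 := by simp [nsq, h2]
    have e : ((p.1 : ℝ)^2)^3 = (p.1 : ℝ)^6 := by ring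
    rw [hnsq, e]
    simp [vz, h1, h2]
  · simp only [vz, if_neg h1, if_neg h2, mul_zero, zero_mul, add_zero]
    have ha := one_le_sq_cast h1
    have hb := one_le_sq_cast h2
    rw [one_div_mul_one_div]
    apply one_div_le_one_div_of_le
    · nlinarith
    · unfold nsq
      nlinarith [sq_nonneg ((p.1 : ℝ)^2 - (p.2 : ℝ)^2), sq_nonneg ((p.1 : ℝ)^2 + (p.2 : ℝ)^2)]

theorem stmt14 :
    (∑' w : {w : (ℤ × ℤ) × (ℤ × ℤ) × (ℤ × ℤ) //
        w.1 ≠ 0 ∧ w.2.1 ≠ 0 ∧ w.2.2 ≠ 0 ∧ w.1 + w.2.1 + w.2.2 = 0 ∧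
        w.1.1 * w.2.1.2 - w.1.2 * w.2.1.1 = 0},
      (1 : ℝ) / (nsq w.1.1 * nsq w.1.2.1 * nsq w.1.2.2))
      = 2 * ((1 : ℝ) / 2 * ∑' p : {p : ℤ × ℤ // p ≠ 0}, (1 : ℝ) / nsq p.1 ^ 3) := by
  have sQ : Summable (fun d : ↥PPset => 1/(nsq d.1)^3) := snsq_glob.subtype _
  have sQn : Summable (fun d : ↥PPset => ‖1/(nsq d.1)^3‖) :=
    norm_summable_of_nonneg sQ (fun d => one_div_nonneg.mpr (pow_nonneg (nsq_nonneg _) 3))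
  have s6sub : Summable (fun k : {k : ℤ // k ≠ 0} => 1/((k.1 : ℤ) : ℝ)^6) := s6.subtype _
  have s6n : Summable (fun k : {k : ℤ // k ≠ 0} => ‖1/((k.1 : ℤ) : ℝ)^6‖) :=
    norm_summable_of_nonneg s6sub (fun k => by positivity)
  have sWsub : Summable (fun w : ↥Wset => gW w.1) := sgW_glob.subtype _
  have sWn : Summable (fun w : ↥Wset => ‖gW w.1‖) :=
    norm_summable_of_nonneg sWsub (fun w => by unfold gW; positivity)
  have hRHS : (∑' p : {p : ℤ × ℤ // p ≠ 0}, (1 : ℝ) / nsq p.1 ^ 3)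
      = (∑' k : {k : ℤ // k ≠ 0}, 1/((k.1 : ℤ) : ℝ)^6) * (∑' d : ↥PPset, 1/(nsq d.1)^3) := by
    calc (∑' p : {p : ℤ × ℤ // p ≠ 0}, (1 : ℝ) / nsq p.1 ^ 3)
        = ∑' x : ({k : ℤ // k ≠ 0} × ↥PPset), (1 : ℝ) / nsq (e2 x).1 ^ 3 :=
          (e2.tsum_eq (fun p : {p : ℤ × ℤ // p ≠ 0} => (1 : ℝ) / nsq p.1 ^ 3)).symm
      _ = ∑' z : ({k : ℤ // k ≠ 0} × ↥PPset),
            (fun k : {k : ℤ // k ≠ 0} => 1/((k.1 : ℤ) : ℝ)^6) z.1 *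
            (fun d : ↥PPset => 1/(nsq d.1)^3) z.2 := by
          apply tsum_congr
          intro x
          have h1 : (e2 x).1 = (x.1.1 * x.2.1.1, x.1.1 * x.2.1.2) := rfl
          rw [h1, nsq_scale]
          show (1 : ℝ) / ((x.1.1 : ℝ)^2 * nsq x.2.1)^3 =
            1/((x.1.1 : ℤ) : ℝ)^6 * (1/(nsq x.2.1)^3)
          rw [mul_pow, one_div_mul_one_div]
          congr 2
          rw [← pow_mul]
      _ = _ := (tsum_mul_tsum_of_summable_norm s6n sQn).symm
  have hLHS : (∑' w : Tsub, (1 : ℝ) / (nsq w.1.1 * nsq w.1.2.1 * nsq w.1.2.2))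
      = (∑' w : ↥Wset, gW w.1) * (∑' d : ↥PPset, 1/(nsq d.1)^3) := by
    calc (∑' w : Tsub, (1 : ℝ) / (nsq w.1.1 * nsq w.1.2.1 * nsq w.1.2.2))
        = ∑' x : (↥Wset × ↥PPset),
            (1 : ℝ) / (nsq (e1 x).1.1 * nsq (e1 x).1.2.1 * nsq (e1 x).1.2.2) :=
          (e1.tsum_eq (fun w : Tsub =>
            (1 : ℝ) / (nsq w.1.1 * nsq w.1.2.1 * nsq w.1.2.2))).symm
      _ = ∑' z : (↥Wset × ↥PPset),
            (fun w : ↥Wset => gW w.1) z.1 * (fun d : ↥PPset => 1/(nsq d.1)^3) z.2 := by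
          apply tsum_congr
          intro x
          have h1 : nsq (e1 x).1.1 = (x.1.1.1 : ℝ)^2 * nsq x.2.1 :=
            nsq_scale x.1.1.1 x.2.1
          have h2 : nsq (e1 x).1.2.1 = (x.1.1.2 : ℝ)^2 * nsq x.2.1 :=
            nsq_scale x.1.1.2 x.2.1
          have h3 : nsq (e1 x).1.2.2 = ((-(x.1.1.1 + x.1.1.2) : ℤ) : ℝ)^2 * nsq x.2.1 :=
            nsq_scale (-(x.1.1.1 + x.1.1.2)) x.2.1
          rw [h1, h2, h3]
          show (1 : ℝ) / ((x.1.1.1 : ℝ)^2 * nsq x.2.1 * ((x.1.1.2 : ℝ)^2 * nsq x.2.1) *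
              (((-(x.1.1.1 + x.1.1.2) : ℤ) : ℝ)^2 * nsq x.2.1)) =
            1/((x.1.1.1 : ℝ)^2 * (x.1.1.2 : ℝ)^2 * ((x.1.1.1 : ℝ) + (x.1.1.2 : ℝ))^2) *
            (1/(nsq x.2.1)^3)
          rw [one_div_mul_one_div]
          congr 1
          push_cast
          ring
      _ = _ := (tsum_mul_tsum_of_summable_norm sWn sQn).symm
  rw [hLHS, hRHS, key]
  ring
end
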